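/- arXiv:1404.1601 — 3 statements merged into one kernel-verified Lean document; each statement's English description precedes it below -/
import Mathlib

section
/- The faulty min-sum variable node update rule preserves symmetry: for all sign-magnitude words m₀, …, m_{d_v-1} and all error patterns e₀, …, e_{d_v-1} ∈ {0,1}^b, it holds that Φ(val(e₀(-m₀)), val(e₁(-m₁)), …) = -Φ(val(e₀(m₀)), val(e₁(m₁)), …). -/
/-- A `b`-bit sign-magnitude word (`b = k + 1` bits): a sign bit together with
a `k`-bit magnitude string. -/
structure SMWord (k : ℕ) where
  sign : Bool
  mag : Fin k → Bool

/-- The integer encoded by a bit string (standard binary encoding). -/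
def magVal {k : ℕ} (u : Fin k → Bool) : ℤ :=
  ∑ i : Fin k, if u i then 2 ^ (i : ℕ) else 0

/-- The value of a sign-magnitude word: `(-1)^s ·` (integer encoded by the
magnitude bits). -/
def SMWord.val {k : ℕ} (m : SMWord k) : ℤ :=
  (if m.sign then -1 else 1) * magVal m.mag

/-- Negation of a sign-magnitude word: flip the sign bit, keep the magnitude. -/
def SMWord.neg {k : ℕ} (m : SMWord k) : SMWord k :=
  ⟨!m.sign, m.mag⟩

/-- A `b`-bit error pattern `e ∈ {0,1}^b` (`b = k + 1`): one bit aligned with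
the sign bit and `k` bits aligned with the magnitude bits. -/
structure ErrPattern (k : ℕ) where
  sign : Bool
  mag : Fin k → Bool

/-- An error pattern acts on a sign-magnitude word by bitwise XOR. -/
def applyErr {k : ℕ} (e : ErrPattern k) (m : SMWord k) : SMWord k :=
  ⟨xor e.sign m.sign, fun i => xor (e.mag i) (m.mag i)⟩

theorem SMWord.val_neg {k : ℕ} (m : SMWord k) : m.neg.val = -m.val := by
  cases h : m.sign <;> simp [SMWord.val, SMWord.neg, h]

theorem applyErr_neg {k : ℕ} (e : ErrPattern k) (m : SMWord k) :
    applyErr e m.neg = (applyErr e m).neg := by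
  simp only [applyErr, SMWord.neg, Bool.xor_not]

theorem faulty_var_node_update_odd_general (b : ℕ)
    (dv : ℕ)
    (Φ : (ℕ → ℤ) → ℤ)
    (hΦ : ∀ m : ℕ → ℤ, Φ m = m 0 + ∑ j ∈ Finset.Icc 1 (dv - 1), m j)
    (m : ℕ → SMWord (b - 1)) (e : ℕ → ErrPattern (b - 1)) :
    Φ (fun i => (applyErr (e i) (m i).neg).val)
      = -Φ (fun i => (applyErr (e i) (m i)).val) := by
  simp only [hΦ, applyErr_neg, SMWord.val_neg, Finset.sum_neg_distrib]
  ring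

/-- The faulty min-sum variable node update rule preserves
symmetry: with `Φ(m₀, …, m_{dv-1}) = m₀ + ∑_{j=1}^{dv-1} m_j` (variable node
degree `dv ≥ 1`), for all `b`-bit sign-magnitude words `m₀, …, m_{dv-1}` and
all error patterns `e₀, …, e_{dv-1} ∈ {0,1}^b`,
`Φ(val(e₀(-m₀)), val(e₁(-m₁)), …) = -Φ(val(e₀(m₀)), val(e₁(m₁)), …)`. -/
theorem faulty_var_node_update_odd (b : ℕ) (hb : 1 ≤ b)
    (dv : ℕ) (hdv : 1 ≤ dv)
    (Φ : (ℕ → ℤ) → ℤ)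
    (hΦ : ∀ m : ℕ → ℤ, Φ m = m 0 + ∑ j ∈ Finset.Icc 1 (dv - 1), m j)
    (m : ℕ → SMWord (b - 1)) (e : ℕ → ErrPattern (b - 1)) :
    Φ (fun i => (applyErr (e i) (m i).neg).val)
      = -Φ (fun i => (applyErr (e i) (m i)).val) :=
  faulty_var_node_update_odd_general b dv Φ hΦ m e
end

section
/- The faulty min-sum check node update rule preserves symmetry: for all sign-magnitude words m₁, …, m_{d_c-1}, all error patterns e₁, …, e_{d_c-1} ∈ {0,1}^b, and all signs b₁, …, b_{d_c-1} ∈ {+1, -1}, it holds that Ψ(val(e₁(b₁·m₁)), …, val(e_{d_c-1}(b_{d_c-1}·m_{d_c-1}))) = (∏_{i=1}^{d_c-1} b_i) · Ψ(val(e₁(m₁)), …, val(e_{d_c-1}(m_{d_c-1}))), where bᵢ·mᵢ denotes mᵢ if bᵢ = +1 and the negation of mᵢ if bᵢ = -1. -/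
/-- The action `bᵢ · mᵢ` of a sign `bᵢ ∈ {+1, -1}` on a sign-magnitude word:
`mᵢ` if `bᵢ = +1` and the negation of `mᵢ` if `bᵢ = -1`. -/
def signAct {k : ℕ} (s : ℤ) (m : SMWord k) : SMWord k :=
  if s = 1 then m else m.neg

theorem val_applyErr_signAct {k : ℕ} (e : ErrPattern k) (m : SMWord k) {s : ℤ}
    (hs : s = 1 ∨ s = -1) :
    (applyErr e (signAct s m)).val = s * (applyErr e m).val := by
  rcases hs with rfl | rfl
  · simp [signAct]
  · simp [signAct, applyErr_neg, SMWord.val_neg]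

def minSum {ι : Type*} [Fintype ι] (hne : (Finset.univ : Finset ι).Nonempty) (x : ι → ℤ) : ℤ :=
  (∏ i, (x i).sign) * Finset.univ.inf' hne fun i => |x i|

theorem minSum_mul_signs {ι : Type*} [Fintype ι] (hne : (Finset.univ : Finset ι).Nonempty)
    (x s : ι → ℤ) (hs : ∀ i, s i = 1 ∨ s i = -1) :
    minSum hne (fun i => s i * x i) = (∏ i, s i) * minSum hne x := by
  have hsign : ∀ i, (s i).sign = s i := fun i => by rcases hs i with h | h <;> rw [h] <;> rfl
  have habs : ∀ i, |s i| = 1 := fun i => by rcases hs i with h | h <;> rw [h] <;> rfl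
  simp only [minSum, Int.sign_mul, abs_mul, hsign, habs, one_mul, Finset.prod_mul_distrib]
  ring

/-- The faulty min-sum check node update rule preserves
symmetry: with `Ψ(m₁, …, m_{dc-1}) = (∏ᵢ sign(mᵢ)) · minᵢ |mᵢ|` (check node
degree `dc ≥ 2`, `sign 0 = 0`), for all `b`-bit sign-magnitude words `mᵢ`,
all error patterns `eᵢ ∈ {0,1}^b`, and all signs `bᵢ ∈ {+1, -1}`,
`Ψ(val(e₁(b₁·m₁)), …) = (∏ᵢ bᵢ) · Ψ(val(e₁(m₁)), …)`. -/
theorem faulty_check_node_update_sign_symmetry (b : ℕ)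
    (dc : ℕ) (hdc : 2 ≤ dc)
    (Ψ : (Fin (dc - 1) → ℤ) → ℤ)
    (hΨ : ∀ m : Fin (dc - 1) → ℤ,
      Ψ m = (∏ i, Int.sign (m i)) *
        Finset.univ.inf' ⟨⟨0, by omega⟩, Finset.mem_univ _⟩ (fun i => |m i|))
    (m : Fin (dc - 1) → SMWord (b - 1)) (e : Fin (dc - 1) → ErrPattern (b - 1))
    (s : Fin (dc - 1) → ℤ) (hs : ∀ i, s i = 1 ∨ s i = -1) :
    Ψ (fun i => (applyErr (e i) (signAct (s i) (m i))).val)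
      = (∏ i, s i) * Ψ (fun i => (applyErr (e i) (m i)).val) := by
  have hval : (fun i => (applyErr (e i) (signAct (s i) (m i))).val)
      = fun i => s i * (applyErr (e i) (m i)).val :=
    funext fun i => val_applyErr_signAct (e i) (m i) (hs i)
  rw [hval, hΨ, hΨ]
  exact minSum_mul_signs _ _ s hs
end

section
/- Density evolution identity for the check node update, positive values: let X₁, …, Xₙ be independent and identically distributed integer-valued random variables and let m ≥ 1 be an integer. Then the probability that the min-sum check node output (∏_{i=1}^n sign(X_i)) · min_{i} |X_i| is at least m equals Σ_{k even, 0 ≤ k ≤ n} C(n, k) · P(X₁ ≤ -m)^k · P(X₁ ≥ m)^{n-k}. -/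
/-! For `m ≥ 1` the min-sum output is at least `m` exactly when every `|Xᵢ| ≥ m` and an even
number of the `Xᵢ` are negative, i.e. when each `Xᵢ` lies in `A = (-∞, -m]` or `B = [m, ∞)` and
the set `S` of indices landing in `A` has even size. Splitting the event according to `S` gives
disjoint events of probability `P(A)^|S| P(B)^(n-|S|)` by independence, and grouping the sets `S`
by size produces the binomial coefficients. -/

open MeasureTheory ProbabilityTheory ENNReal Finset

lemma Int.prod_sign_eq_neg_one_pow {ι : Type*} (s : Finset ι) {x : ι → ℤ}
    (hx : ∀ i ∈ s, x i ≠ 0) : ∏ i ∈ s, (x i).sign = (-1) ^ #{i ∈ s | x i < 0} := by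
  have hsign : ∀ i ∈ s, (x i).sign = if x i < 0 then -1 else 1 := fun i hi => by
    split_ifs with hneg
    · exact Int.sign_eq_neg_one_of_neg hneg
    · exact Int.sign_eq_one_of_pos <| (not_lt.mp hneg).lt_of_ne' (hx i hi)
  rw [prod_congr rfl hsign, prod_ite, prod_const, prod_const_one, mul_one]

lemma Int.le_neg_one_pow_mul_iff {m a : ℤ} (hm : 0 < m) (ha : 0 ≤ a) (k : ℕ) :
    m ≤ (-1) ^ k * a ↔ Even k ∧ m ≤ a := by
  rcases k.even_or_odd with hk | hk
  · simp [hk, hk.neg_one_pow]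
  · simp only [hk.neg_one_pow, Nat.not_even_iff_odd.mpr hk, false_and, iff_false]
    omega

lemma Int.le_prod_sign_mul_inf'_abs_iff {ι : Type*} [Fintype ι] (h : (univ : Finset ι).Nonempty)
    (x : ι → ℤ) {m : ℤ} (hm : 0 < m) :
    m ≤ (∏ i, (x i).sign) * univ.inf' h (fun i => |x i|) ↔
      (∀ i, x i ∈ Set.Iic (-m) ∪ Set.Ici m) ∧ Even #{i | x i ∈ Set.Iic (-m)} := by
  have hmem : ∀ i, x i ∈ Set.Iic (-m) ∪ Set.Ici m ↔ m ≤ |x i| := fun i => by rw [le_abs']; rfl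
  simp only [hmem]
  by_cases hx : ∀ i, x i ≠ 0
  · rw [Int.prod_sign_eq_neg_one_pow _ fun i _ => hx i,
      Int.le_neg_one_pow_mul_iff hm (le_inf' h _ fun i _ => abs_nonneg _), le_inf'_iff, and_comm]
    simp only [mem_univ, forall_const, and_congr_right_iff]
    intro habs
    have hneg : ∀ i, x i ∈ Set.Iic (-m) ↔ x i < 0 := fun i => by
      have := habs i
      rw [Set.mem_Iic]
      rcases abs_cases (x i) with ⟨hxi, -⟩ | ⟨hxi, -⟩ <;> omega
    simp only [hneg]
  · obtain ⟨i, hi⟩ := not_forall_not.mp hx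
    have hprod : ∏ i, (x i).sign = 0 := prod_eq_zero (mem_univ i) (by simp [hi])
    simp only [hprod, zero_mul]
    have hi_small : ¬m ≤ |x i| := by simp [hi, hm]
    exact iff_of_false (by omega) fun h' => hi_small (h'.1 i)

section Binomial

variable {ι Ω β : Type*}

lemma Finset.sum_filter_card_pow_mul_pow [Fintype ι] {R : Type*} [CommSemiring R]
    (P : ℕ → Prop) [DecidablePred P] (p q : R) :
    ∑ S : Finset ι with P #S, p ^ #S * q ^ (Fintype.card ι - #S) =
      ∑ k ∈ range (Fintype.card ι + 1) with P k,
        (Fintype.card ι).choose k * p ^ k * q ^ (Fintype.card ι - k) := by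
  classical
  rw [sum_filter, sum_filter, ← powerset_univ,
    sum_powerset_apply_card (fun k => if P k then p ^ k * q ^ (Fintype.card ι - k) else 0)]
  simp [card_univ, nsmul_eq_mul, mul_assoc]

lemma Finset.eq_filter_of_forall_mem_ite [Fintype ι] [DecidableEq ι] {A B : Set β}
    [DecidablePred (· ∈ A)] (hAB : Disjoint A B) {x : ι → β} {S : Finset ι}
    (hx : ∀ i, x i ∈ if i ∈ S then A else B) :
    S = univ.filter fun i => x i ∈ A := by
  ext i
  have := hx i
  by_cases hi : i ∈ S
  · simp_all
  · simp only [hi, if_false] at this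
    simpa [hi] using Set.disjoint_right.mp hAB this

lemma setOf_forall_mem_union_and_card_eq_biUnion [Fintype ι] [DecidableEq ι] {A B : Set β}
    [DecidablePred (· ∈ A)] (hAB : Disjoint A B) (X : ι → Ω → β) (P : ℕ → Prop)
    [DecidablePred P] :
    {ω | (∀ i, X i ω ∈ A ∪ B) ∧ P #{i | X i ω ∈ A}} =
      ⋃ S ∈ (univ.filter fun S : Finset ι => P #S), ⋂ i, X i ⁻¹' (if i ∈ S then A else B) := by
  ext ω
  simp only [Set.mem_ofPred_eq, Set.mem_iUnion, Set.mem_iInter, Set.mem_preimage, mem_filter,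
    mem_univ, true_and, exists_prop]
  constructor
  · rintro ⟨hmem, hP⟩
    refine ⟨_, hP, fun i => ?_⟩
    by_cases hi : X i ω ∈ A
    · simp [hi]
    · simpa [hi] using (hmem i).resolve_left hi
  · rintro ⟨S, hP, hS⟩
    refine ⟨fun i => ?_, eq_filter_of_forall_mem_ite hAB hS ▸ hP⟩
    have := hS i
    split_ifs at this
    exacts [Or.inl this, Or.inr this]

variable [Fintype ι] [DecidableEq ι] [MeasurableSpace Ω] [MeasurableSpace β] {μ : Measure Ω}
  {X : ι → Ω → β} {i₀ : ι} {A B : Set β}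

lemma ProbabilityTheory.iIndepFun.measure_iInter_preimage_ite (hindep : iIndepFun X μ)
    (hident : ∀ i, IdentDistrib (X i) (X i₀) μ μ) (hA : MeasurableSet A) (hB : MeasurableSet B)
    (S : Finset ι) :
    μ (⋂ i, X i ⁻¹' (if i ∈ S then A else B)) =
      μ (X i₀ ⁻¹' A) ^ #S * μ (X i₀ ⁻¹' B) ^ (Fintype.card ι - #S) := by
  rw [hindep.meas_iInter fun i => ⟨_, by split_ifs <;> assumption, rfl⟩]
  have hmarg : ∀ i, μ (X i ⁻¹' (if i ∈ S then A else B)) =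
      if i ∈ S then μ (X i₀ ⁻¹' A) else μ (X i₀ ⁻¹' B) := fun i => by
    split_ifs
    exacts [(hident i).measure_mem_eq hA, (hident i).measure_mem_eq hB]
  rw [prod_congr rfl fun i _ => hmarg i, prod_ite, prod_const, prod_const, filter_mem_eq_inter,
    univ_inter, filter_notMem_eq_sdiff, card_univ_sdiff]

theorem ProbabilityTheory.iIndepFun.measure_forall_mem_union_and_card_mem
    (hindep : iIndepFun X μ) (hident : ∀ i, IdentDistrib (X i) (X i₀) μ μ)
    (hA : MeasurableSet A) (hB : MeasurableSet B) (hAB : Disjoint A B) [DecidablePred (· ∈ A)]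
    (P : ℕ → Prop) [DecidablePred P] :
    μ {ω | (∀ i, X i ω ∈ A ∪ B) ∧ P #{i | X i ω ∈ A}} =
      ∑ k ∈ range (Fintype.card ι + 1) with P k,
        (Fintype.card ι).choose k * μ (X i₀ ⁻¹' A) ^ k * μ (X i₀ ⁻¹' B) ^ (Fintype.card ι - k) := by
  rw [setOf_forall_mem_union_and_card_eq_biUnion hAB, measure_biUnion_finset₀]
  · simp_rw [hindep.measure_iInter_preimage_ite hident hA hB]
    exact sum_filter_card_pow_mul_pow P _ _
  · intro S _ T _ hST
    refine Disjoint.aedisjoint <| Set.disjoint_left.mpr fun ω hS hT => hST ?_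
    simp only [Set.mem_iInter, Set.mem_preimage] at hS hT
    rw [eq_filter_of_forall_mem_ite hAB hS, eq_filter_of_forall_mem_ite hAB hT]
  · refine fun S _ => .iInter fun i => (hident i).aemeasurable_fst.nullMeasurableSet_preimage ?_
    split_ifs <;> assumption

end Binomial

theorem de_check_node_pos_general {Ω : Type*} [MeasurableSpace Ω]
    (μ : Measure Ω)
    (n : ℕ) (hn : 0 < n) (X : Fin n → Ω → ℤ)
    (hindep : iIndepFun X μ)
    (hident : ∀ i, IdentDistrib (X i) (X ⟨0, hn⟩) μ μ)
    (m : ℤ) (hm : 1 ≤ m) :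
    μ {ω | m ≤ (∏ i, Int.sign (X i ω)) *
        Finset.univ.inf' ⟨⟨0, hn⟩, Finset.mem_univ _⟩ (fun i => |X i ω|)}
      = ∑ k ∈ (Finset.range (n + 1)).filter (fun k => Even k),
          (n.choose k : ℝ≥0∞) * μ {ω | X ⟨0, hn⟩ ω ≤ -m} ^ k *
            μ {ω | m ≤ X ⟨0, hn⟩ ω} ^ (n - k) := by
  have hevent : {ω | m ≤ (∏ i, Int.sign (X i ω)) *
        Finset.univ.inf' ⟨⟨0, hn⟩, Finset.mem_univ _⟩ (fun i => |X i ω|)} =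
      {ω | (∀ i, X i ω ∈ Set.Iic (-m) ∪ Set.Ici m) ∧ Even #{i | X i ω ∈ Set.Iic (-m)}} :=
    Set.ext fun ω => Int.le_prod_sign_mul_inf'_abs_iff _ (fun i => X i ω) (by omega)
  rw [hevent, hindep.measure_forall_mem_union_and_card_mem hident measurableSet_Iic
    measurableSet_Ici (Set.Iic_disjoint_Ici.mpr (by omega)) Even, Fintype.card_fin]
  rfl

/-- Density evolution identity for the min-sum check node
update, positive values: let `X₁, …, Xₙ` be i.i.d. integer-valued random
variables and let `m ≥ 1` be an integer. Then the probability that the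
min-sum check node output `(∏ᵢ sign(Xᵢ)) · minᵢ |Xᵢ|` is at least `m` equals
`∑_{k even, 0 ≤ k ≤ n} C(n,k) · P(X₁ ≤ -m)^k · P(X₁ ≥ m)^{n-k}`. -/
theorem de_check_node_pos {Ω : Type*} [MeasurableSpace Ω]
    (μ : Measure Ω) [IsProbabilityMeasure μ]
    (n : ℕ) (hn : 0 < n) (X : Fin n → Ω → ℤ)
    (hmeas : ∀ i, Measurable (X i))
    (hindep : iIndepFun X μ)
    (hident : ∀ i, IdentDistrib (X i) (X ⟨0, hn⟩) μ μ)
    (m : ℤ) (hm : 1 ≤ m) :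
    μ {ω | m ≤ (∏ i, Int.sign (X i ω)) *
        Finset.univ.inf' ⟨⟨0, hn⟩, Finset.mem_univ _⟩ (fun i => |X i ω|)}
      = ∑ k ∈ (Finset.range (n + 1)).filter (fun k => Even k),
          (n.choose k : ℝ≥0∞) * μ {ω | X ⟨0, hn⟩ ω ≤ -m} ^ k *
            μ {ω | m ≤ X ⟨0, hn⟩ ω} ^ (n - k) :=
  de_check_node_pos_general μ n hn X hindep hident m hm
end
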